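/- arXiv:2209.08916 — 3 statements merged into one kernel-verified Lean document; each statement's English description precedes it below -/
import Mathlib

section
/- Let λ = ∞ and let (u_h, p_h) solve the pressure-robust modified scheme, and let (u, p) solve the continuous incompressible problem with right-hand side f. Then for every discretely divergence-free w_h ∈ V_h⁰ it holds a(u_h, w_h) = −2μ (∇·ε(u), π^div w_h)_{L²}. -/
open scoped RealInnerProductSpace BigOperators

/-- Identity (3.8): with `λ = ∞`, for the modified scheme and the continuous
incompressible problem, every discretely divergence-free `w_h ∈ V_h⁰` satisfies
`a(u_h, w_h) = -2μ (∇·ε(u), π^div w_h)`. -/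
theorem stmt8
    {V Q W E : Type*}
    [NormedAddCommGroup V] [InnerProductSpace ℝ V]
    [NormedAddCommGroup Q] [InnerProductSpace ℝ Q]
    [NormedAddCommGroup W] [InnerProductSpace ℝ W]
    [NormedAddCommGroup E] [InnerProductSpace ℝ E]
    (eps : V →ₗ[ℝ] E) (dvg : V →ₗ[ℝ] Q) (incl : V →ₗ[ℝ] W)
    (dvgW : W →ₗ[ℝ] Q) (zeroTrace : W → Prop) (divEps : V → W)
    (μ : ℝ) (hμ : 0 < μ)
    (Vh : Submodule ℝ V) (Qh : Submodule ℝ Q) (piDiv : V →ₗ[ℝ] W)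
    (F : W →ₗ[ℝ] ℝ) (u uh : V) (p ph : Q)
    -- π^div maps discretely divergence-free functions to divergence-free ones
    (hdivfree : ∀ vh ∈ Vh, (∀ qh ∈ Qh, ⟪ qh, dvg vh ⟫ = 0) → dvgW (piDiv vh) = 0)
    -- zero normal trace of reconstructed fields
    (htrace : ∀ vh ∈ Vh, zeroTrace (piDiv vh))
    -- (u, p) solves the continuous incompressible problem (strong form tested
    -- against zero-normal-trace L² vector fields)
    (hstrong : ∀ z : W, zeroTrace z →
        -(2 * μ) * ⟪ divEps u, z ⟫ + ⟪ p, dvgW z ⟫ = F z)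
    (hdivu : dvg u = 0)
    -- (u_h, p_h) solves the modified scheme with λ = ∞
    (huh : uh ∈ Vh) (hph : ph ∈ Qh)
    (hscheme1 : ∀ vh ∈ Vh, 2 * μ * ⟪ eps uh, eps vh ⟫ + ⟪ ph, dvg vh ⟫ = F (piDiv vh))
    (hscheme2 : ∀ qh ∈ Qh, ⟪ qh, dvg uh ⟫ = 0) :
    ∀ wh ∈ Vh, (∀ qh ∈ Qh, ⟪ qh, dvg wh ⟫ = 0) →
      2 * μ * ⟪ eps uh, eps wh ⟫ = -(2 * μ) * ⟪ divEps u, piDiv wh ⟫ := by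
  intro wh hwh hdf
  have h1 := hscheme1 wh hwh
  have h2 : ⟪ ph, dvg wh ⟫ = 0 := hdf ph hph
  have h3 := hstrong (piDiv wh) (htrace wh hwh)
  have h4 : dvgW (piDiv wh) = 0 := hdivfree wh hwh hdf
  rw [h4, inner_zero_right] at h3
  rw [h2, add_zero] at h1
  linarith
end

section
/- Let f = ∇φ with φ ∈ L²(Ω) and let (u_h, p_h) solve the modified scheme with λ ≠ ∞. Then the energy identity 2μ (ε(u_h), ε(u_h))_{L²} + λ (π^{L²}∇·u_h, π^{L²}∇·u_h)_{L²} = −(π^{L²}φ, π^{L²}∇·u_h)_{L²} holds, and consequently 2μ ‖ε(u_h)‖²_{L²} + λ ‖π^{L²}∇·u_h‖²_{L²} ≤ ‖φ‖_{L²} ‖π^{L²}∇·u_h‖_{L²}. -/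
open scoped RealInnerProductSpace

/-!
Testing the first scheme equation with `u_h` gives `2μ ‖ε(u_h)‖² + (p_h, ∇·u_h) = (f, π^div u_h)`.
The second equation identifies the pressure as `p_h = λ π^{L²} ∇·u_h`, so the pressure term is
`λ ‖π^{L²} ∇·u_h‖²`. Since `f = ∇φ` and `π^div u_h` has zero normal trace, the right-hand side is
`-(φ, ∇·π^div u_h)`; as `∇·π^div u_h ∈ Q_h`, the commuting property turns it into
`-(π^{L²} φ, π^{L²} ∇·u_h)`. Cauchy–Schwarz and `‖π^{L²} φ‖ ≤ ‖φ‖` give the bound.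
-/

section OrthogonalProjection

variable {Q : Type*} [SeminormedAddCommGroup Q] [InnerProductSpace ℝ Q]
  {K : Submodule ℝ Q} {P : Q → Q}

theorem inner_eq_inner_proj_of_mem (horth : ∀ q, ∀ k ∈ K, ⟪q - P q, k⟫ = 0)
    (q : Q) {k : Q} (hk : k ∈ K) : ⟪k, q⟫ = ⟪k, P q⟫ := by
  have h := horth q k hk
  rw [inner_sub_left, sub_eq_zero] at h
  rw [real_inner_comm q k, h, real_inner_comm]

theorem norm_proj_le (hmem : ∀ q, P q ∈ K) (horth : ∀ q, ∀ k ∈ K, ⟪q - P q, k⟫ = 0)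
    (q : Q) : ‖P q‖ ≤ ‖q‖ := by
  have hpyth := norm_add_sq_eq_norm_sq_add_norm_sq_real (horth q (P q) (hmem q))
  rw [sub_add_cancel] at hpyth
  refine (mul_self_le_mul_self_iff (norm_nonneg _) (norm_nonneg _)).2 ?_
  rw [hpyth]
  exact le_add_of_nonneg_left (mul_self_nonneg _)

end OrthogonalProjection

section DiscretePressure

variable {Q : Type*} [NormedAddCommGroup Q] [InnerProductSpace ℝ Q] {K : Submodule ℝ Q}

theorem Submodule.eq_of_forall_inner_left_eq {x y : Q} (hx : x ∈ K) (hy : y ∈ K)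
    (h : ∀ k ∈ K, ⟪k, x⟫ = ⟪k, y⟫) : x = y :=
  congrArg Subtype.val <| ext_inner_left ℝ (x := (⟨x, hx⟩ : K)) (y := ⟨y, hy⟩) fun k => h k k.2

theorem eq_smul_proj_of_penalty {P : Q → Q} (hmem : ∀ q, P q ∈ K)
    (horth : ∀ q, ∀ k ∈ K, ⟪q - P q, k⟫ = 0) {lam : ℝ} (hlam : lam ≠ 0) {p v : Q} (hp : p ∈ K)
    (h : ∀ k ∈ K, ⟪k, v⟫ - (1 / lam) * ⟪p, k⟫ = 0) : p = lam • P v := by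
  refine K.eq_of_forall_inner_left_eq hp (K.smul_mem lam (hmem v)) fun k hk => ?_
  have hk' := h k hk
  rw [real_inner_smul_right, ← inner_eq_inner_proj_of_mem horth v hk, real_inner_comm]
  field_simp at hk'
  linarith

end DiscretePressure

theorem stmt11_general
    {V Q W E : Type*}
    [NormedAddCommGroup V] [InnerProductSpace ℝ V]
    [NormedAddCommGroup Q] [InnerProductSpace ℝ Q]
    [NormedAddCommGroup W] [InnerProductSpace ℝ W]
    [NormedAddCommGroup E] [InnerProductSpace ℝ E]
    (eps : V →ₗ[ℝ] E) (dvg : V →ₗ[ℝ] Q) (dvgW : W →ₗ[ℝ] Q) (zeroTrace : W → Prop)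
    (μ lam : ℝ) (hlam : 0 < lam)
    (Vh : Submodule ℝ V) (Qh : Submodule ℝ Q)
    (piL2 : Q →ₗ[ℝ] Q) (piDiv : V →ₗ[ℝ] W) (F : W →ₗ[ℝ] ℝ) (φ : Q) (uh : V) (ph : Q)
    -- π^{L²} is the L²-projection onto Q_h
    (hpiL2mem : ∀ q : Q, piL2 q ∈ Qh)
    (hpiL2orth : ∀ q : Q, ∀ qh ∈ Qh, ⟪ q - piL2 q, qh ⟫ = 0)
    -- commuting property, zero normal trace and ∇·(range π^div) ⊆ Q_h
    (hcomm : ∀ vh ∈ Vh, ∀ qh ∈ Qh, ⟪ qh, dvgW (piDiv vh) ⟫ = ⟪ qh, dvg vh ⟫)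
    (htrace : ∀ vh ∈ Vh, zeroTrace (piDiv vh))
    (hrange : ∀ vh ∈ Vh, dvgW (piDiv vh) ∈ Qh)
    -- f = ∇φ acting on zero-normal-trace fields by integration by parts
    (hgrad : ∀ z : W, zeroTrace z → F z = -⟪ φ, dvgW z ⟫)
    -- (u_h, p_h) solves the modified scheme
    (huh : uh ∈ Vh) (hph : ph ∈ Qh)
    (hscheme1 : ∀ vh ∈ Vh, 2 * μ * ⟪ eps uh, eps vh ⟫ + ⟪ ph, dvg vh ⟫ = F (piDiv vh))
    (hscheme2 : ∀ qh ∈ Qh, ⟪ qh, dvg uh ⟫ - (1 / lam) * ⟪ ph, qh ⟫ = 0) :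
    2 * μ * ⟪ eps uh, eps uh ⟫ + lam * ⟪ piL2 (dvg uh), piL2 (dvg uh) ⟫
        = -⟪ piL2 φ, piL2 (dvg uh) ⟫
    ∧ 2 * μ * ‖eps uh‖ ^ 2 + lam * ‖piL2 (dvg uh)‖ ^ 2
        ≤ ‖φ‖ * ‖piL2 (dvg uh)‖ := by
  have hproj := inner_eq_inner_proj_of_mem hpiL2orth
  have hpressure : ph = lam • piL2 (dvg uh) :=
    eq_smul_proj_of_penalty hpiL2mem hpiL2orth hlam.ne' hph hscheme2
  have hload : F (piDiv uh) = -⟪piL2 φ, piL2 (dvg uh)⟫ := by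
    rw [hgrad _ (htrace uh huh), real_inner_comm, hproj φ (hrange uh huh), real_inner_comm,
      hcomm uh huh _ (hpiL2mem φ), hproj _ (hpiL2mem φ)]
  have hidentity := hscheme1 uh huh
  rw [hproj _ hph, hpressure, real_inner_smul_left, hload] at hidentity
  refine ⟨hidentity, ?_⟩
  rw [← real_inner_self_eq_norm_sq, ← real_inner_self_eq_norm_sq, hidentity]
  calc -⟪piL2 φ, piL2 (dvg uh)⟫ ≤ ‖piL2 φ‖ * ‖piL2 (dvg uh)‖ := by
        simpa using real_inner_le_norm (-piL2 φ) (piL2 (dvg uh))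
    _ ≤ ‖φ‖ * ‖piL2 (dvg uh)‖ := by gcongr; exact norm_proj_le hpiL2mem hpiL2orth φ

/-- Energy identity (3.13)/(3.14): for `f = ∇φ` and the modified scheme,
`2μ (ε(u_h), ε(u_h)) + λ (π^{L²}∇·u_h, π^{L²}∇·u_h) = -(π^{L²}φ, π^{L²}∇·u_h)` and
`2μ ‖ε(u_h)‖² + λ ‖π^{L²}∇·u_h‖² ≤ ‖φ‖ ‖π^{L²}∇·u_h‖`. -/
theorem stmt11
    {V Q W E : Type*}
    [NormedAddCommGroup V] [InnerProductSpace ℝ V]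
    [NormedAddCommGroup Q] [InnerProductSpace ℝ Q]
    [NormedAddCommGroup W] [InnerProductSpace ℝ W]
    [NormedAddCommGroup E] [InnerProductSpace ℝ E]
    (eps : V →ₗ[ℝ] E) (dvg : V →ₗ[ℝ] Q) (dvgW : W →ₗ[ℝ] Q) (zeroTrace : W → Prop)
    (μ lam : ℝ) (hμ : 0 < μ) (hlam : 0 < lam)
    (Vh : Submodule ℝ V) (Qh : Submodule ℝ Q)
    (piL2 : Q →ₗ[ℝ] Q) (piDiv : V →ₗ[ℝ] W) (F : W →ₗ[ℝ] ℝ) (φ : Q) (uh : V) (ph : Q)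
    -- π^{L²} is the L²-projection onto Q_h
    (hpiL2mem : ∀ q : Q, piL2 q ∈ Qh)
    (hpiL2orth : ∀ q : Q, ∀ qh ∈ Qh, ⟪ q - piL2 q, qh ⟫ = 0)
    -- commuting property, zero normal trace and ∇·(range π^div) ⊆ Q_h
    (hcomm : ∀ vh ∈ Vh, ∀ qh ∈ Qh, ⟪ qh, dvgW (piDiv vh) ⟫ = ⟪ qh, dvg vh ⟫)
    (htrace : ∀ vh ∈ Vh, zeroTrace (piDiv vh))
    (hrange : ∀ vh ∈ Vh, dvgW (piDiv vh) ∈ Qh)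
    -- f = ∇φ acting on zero-normal-trace fields by integration by parts
    (hgrad : ∀ z : W, zeroTrace z → F z = -⟪ φ, dvgW z ⟫)
    -- (u_h, p_h) solves the modified scheme
    (huh : uh ∈ Vh) (hph : ph ∈ Qh)
    (hscheme1 : ∀ vh ∈ Vh, 2 * μ * ⟪ eps uh, eps vh ⟫ + ⟪ ph, dvg vh ⟫ = F (piDiv vh))
    (hscheme2 : ∀ qh ∈ Qh, ⟪ qh, dvg uh ⟫ - (1 / lam) * ⟪ ph, qh ⟫ = 0) :
    2 * μ * ⟪ eps uh, eps uh ⟫ + lam * ⟪ piL2 (dvg uh), piL2 (dvg uh) ⟫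
        = -⟪ piL2 φ, piL2 (dvg uh) ⟫
    ∧ 2 * μ * ‖eps uh‖ ^ 2 + lam * ‖piL2 (dvg uh)‖ ^ 2
        ≤ ‖φ‖ * ‖piL2 (dvg uh)‖ :=
  stmt11_general eps dvg dvgW zeroTrace μ lam hlam Vh Qh piL2 piDiv F φ uh ph hpiL2mem hpiL2orth
    hcomm htrace hrange hgrad huh hph hscheme1 hscheme2
end

section
/- Let f = ∇φ with φ ∈ L²(Ω) and let (u_h, p_h) solve the modified scheme. Then a(u_h, v_h) = 0 for every discretely divergence-free v_h ∈ V_h⁰, i.e. u_h lies in the discrete a-orthogonal complement V_h^⊥ of V_h⁰. -/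
open scoped RealInnerProductSpace BigOperators

/-- If `f = ∇φ`, the discrete solution of the modified scheme satisfies
`a(u_h, v_h) = 0` for every discretely divergence-free `v_h ∈ V_h⁰`,
i.e. `u_h ∈ V_h^⊥`. -/
theorem stmt12
    {V Q W E : Type*}
    [NormedAddCommGroup V] [InnerProductSpace ℝ V]
    [NormedAddCommGroup Q] [InnerProductSpace ℝ Q]
    [NormedAddCommGroup W] [InnerProductSpace ℝ W]
    [NormedAddCommGroup E] [InnerProductSpace ℝ E]
    (eps : V →ₗ[ℝ] E) (dvg : V →ₗ[ℝ] Q) (dvgW : W →ₗ[ℝ] Q) (zeroTrace : W → Prop)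
    (μ lam : ℝ) (hμ : 0 < μ) (hlam : 0 < lam)
    (Vh : Submodule ℝ V) (Qh : Submodule ℝ Q)
    (piDiv : V →ₗ[ℝ] W) (F : W →ₗ[ℝ] ℝ) (φ : Q) (uh : V) (ph : Q)
    -- π^div maps discretely divergence-free functions to divergence-free ones
    (hdivfree : ∀ vh ∈ Vh, (∀ qh ∈ Qh, ⟪ qh, dvg vh ⟫ = 0) → dvgW (piDiv vh) = 0)
    (htrace : ∀ vh ∈ Vh, zeroTrace (piDiv vh))
    -- f = ∇φ acting on zero-normal-trace fields by integration by parts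
    (hgrad : ∀ z : W, zeroTrace z → F z = -⟪ φ, dvgW z ⟫)
    -- (u_h, p_h) solves the modified scheme
    (huh : uh ∈ Vh) (hph : ph ∈ Qh)
    (hscheme1 : ∀ vh ∈ Vh, 2 * μ * ⟪ eps uh, eps vh ⟫ + ⟪ ph, dvg vh ⟫ = F (piDiv vh))
    (hscheme2 : ∀ qh ∈ Qh, ⟪ qh, dvg uh ⟫ - (1 / lam) * ⟪ ph, qh ⟫ = 0) :
    ∀ vh ∈ Vh, (∀ qh ∈ Qh, ⟪ qh, dvg vh ⟫ = 0) → 2 * μ * ⟪ eps uh, eps vh ⟫ = 0 := by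
  intro vh hvh hdf
  have h1 := hscheme1 vh hvh
  rw [hgrad _ (htrace vh hvh), hdivfree vh hvh hdf] at h1
  have h2 : ⟪ ph, dvg vh ⟫ = 0 := hdf ph hph
  rw [h2] at h1
  simpa using h1
end
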